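/- Let q be an odd prime power, n = 2t with t ≥ 3, and W = {x ∈ F_{q^n} : x + x^{q^t} = 0}. For any 1 ≤ k < 2t with gcd(k, t) = 1: ψ^{(k)}(x) = x^{q^{k(t-1) mod 2t}} for all x ∈ F_{q^t}, and ψ^{(k)}(x) = x^{q^k} for all x ∈ W. -/

import Mathlib

/-!
Write `x ↦ x ^ q` for the `q`-power map. On `F_{q^t} = {x | x ^ q ^ t = x}` the terms
`x ^ q ^ (t + 1)` and `x ^ q ^ (2t - 1)` collapse to `x ^ q` and `x ^ q ^ (t - 1)`, so `ψ` acts as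
`x ↦ x ^ q ^ (t - 1)`; on `W = {x | x ^ q ^ t = -x}` they collapse to `-x ^ q` and
`-x ^ q ^ (t - 1)` (as `q` is odd), so `ψ` acts as `x ↦ x ^ q`. Both sets are stable under these
power maps, so `ψ^[k]` is the `k`-th iterate of the power map, and on `F_{q^t}` the exponent
`q ^ (k (t - 1))` may be reduced modulo `2t` because every point there is `2t`-periodic.
-/

open Function Set

lemma Set.EqOn.iterate_of_mapsTo {α : Type*} {f g : α → α} {s : Set α} (h : EqOn f g s)
    (hg : MapsTo g s s) (n : ℕ) : EqOn f^[n] g^[n] s := by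
  induction n with
  | zero => exact eqOn_refl _ _
  | succ n ih =>
    intro x hx
    rw [iterate_succ_apply, iterate_succ_apply, h hx, ih (hg hx)]

section PowPow

variable {M : Type*} [Monoid M]

lemma pow_pow_add (x : M) (q a b : ℕ) : x ^ q ^ (a + b) = (x ^ q ^ a) ^ q ^ b := by
  rw [pow_add, pow_mul]

lemma isPeriodicPt_pow_iff {x : M} {q n : ℕ} : IsPeriodicPt (· ^ q) n x ↔ x ^ q ^ n = x := by
  rw [IsPeriodicPt, IsFixedPt, pow_iterate]

lemma pow_pow_mod_of_pow_pow_eq_self {x : M} {q n : ℕ} (hx : x ^ q ^ n = x) (m : ℕ) :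
    x ^ q ^ (m % n) = x ^ q ^ m := by
  simpa only [pow_iterate] using (isPeriodicPt_pow_iff.mpr hx).iterate_mod_apply m

lemma mapsTo_pow_setOf_pow_eq_self (m n : ℕ) :
    MapsTo (· ^ m) {x : M | x ^ n = x} {x | x ^ n = x} := fun x (hx : x ^ n = x) => by
  rw [mem_ofPred_eq, ← pow_mul, mul_comm, pow_mul, hx]

lemma mapsTo_pow_setOf_pow_eq_neg [HasDistribNeg M] {m : ℕ} (hm : Odd m) (n : ℕ) :
    MapsTo (· ^ m) {x : M | x ^ n = -x} {x | x ^ n = -x} := fun x (hx : x ^ n = -x) => by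
  rw [mem_ofPred_eq, ← pow_mul, mul_comm, pow_mul, hx, hm.neg_pow]

end PowPow

lemma two_ne_zero_of_odd_card (F : Type*) [Field F] [Fintype F] (h : Odd (Fintype.card F)) :
    (2 : F) ≠ 0 :=
  Ring.two_ne_zero fun hchar =>
    Nat.not_even_iff_odd.mpr h (Nat.even_iff.mpr (FiniteField.even_card_iff_char_two.mp hchar))

section Psi

variable {F : Type*} [Field F] {q t : ℕ}

def psi (q t : ℕ) (x : F) : F :=
  (x ^ q ^ 1 + x ^ q ^ (t - 1) - x ^ q ^ (t + 1) + x ^ q ^ (2 * t - 1)) / 2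

lemma psi_eq_of_pow_eq_self (h2 : (2 : F) ≠ 0) (ht : 1 ≤ t) {x : F} (hx : x ^ q ^ t = x) :
    psi q t x = x ^ q ^ (t - 1) := by
  have hq1 : x ^ q ^ (t + 1) = x ^ q ^ 1 := by rw [pow_pow_add, hx]
  have hq2t : x ^ q ^ (2 * t - 1) = x ^ q ^ (t - 1) := by
    rw [show 2 * t - 1 = t + (t - 1) by omega, pow_pow_add, hx]
  rw [psi, hq1, hq2t]
  field_simp
  ring

lemma psi_eq_of_pow_eq_neg (hq : Odd q) (h2 : (2 : F) ≠ 0) (ht : 1 ≤ t) {x : F}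
    (hx : x ^ q ^ t = -x) : psi q t x = x ^ q ^ 1 := by
  have hq1 : x ^ q ^ (t + 1) = -x ^ q ^ 1 := by rw [pow_pow_add, hx, hq.pow.neg_pow]
  have hq2t : x ^ q ^ (2 * t - 1) = -x ^ q ^ (t - 1) := by
    rw [show 2 * t - 1 = t + (t - 1) by omega, pow_pow_add, hx, hq.pow.neg_pow]
  rw [psi, hq1, hq2t]
  field_simp
  ring

lemma iterate_psi_of_pow_eq_self (h2 : (2 : F) ≠ 0) (ht : 1 ≤ t) {x : F} (hx : x ^ q ^ t = x)
    (k : ℕ) : (psi q t)^[k] x = x ^ q ^ (k * (t - 1) % (2 * t)) := by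
  have hpsi : EqOn (psi q t) (· ^ q ^ (t - 1)) {y : F | y ^ q ^ t = y} :=
    fun y hy => psi_eq_of_pow_eq_self h2 ht hy
  have hx2t : x ^ q ^ (2 * t) = x :=
    isPeriodicPt_pow_iff.mp ((isPeriodicPt_pow_iff.mpr hx).const_mul 2)
  rw [hpsi.iterate_of_mapsTo (mapsTo_pow_setOf_pow_eq_self _ _) k hx, pow_iterate, ← pow_mul,
    pow_pow_mod_of_pow_pow_eq_self hx2t, mul_comm]

lemma iterate_psi_of_pow_eq_neg (hq : Odd q) (h2 : (2 : F) ≠ 0) (ht : 1 ≤ t) {x : F}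
    (hx : x ^ q ^ t = -x) (k : ℕ) : (psi q t)^[k] x = x ^ q ^ k := by
  have hpsi : EqOn (psi q t) (· ^ q ^ 1) {y : F | y ^ q ^ t = -y} :=
    fun y hy => psi_eq_of_pow_eq_neg hq h2 ht hy
  rw [hpsi.iterate_of_mapsTo (mapsTo_pow_setOf_pow_eq_neg hq.pow _) k hx, pow_iterate, ← pow_mul,
    one_mul]

end Psi

theorem stmt_17_general (p r q t k : ℕ) (hpodd : Odd p)
    (hq : q = p ^ r) (ht : 3 ≤ t)
    (F : Type) [Field F] [Fintype F] (hF : Fintype.card F = q ^ (2 * t))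
    (ψ : F → F)
    (hψ : ∀ x : F, ψ x = (x ^ q ^ 1 + x ^ q ^ (t - 1) - x ^ q ^ (t + 1) + x ^ q ^ (2 * t - 1)) / 2) :
    (∀ x : F, x ^ q ^ t = x → ψ^[k] x = x ^ q ^ ((k * (t - 1)) % (2 * t))) ∧
    (∀ x : F, x ^ q ^ t = -x → ψ^[k] x = x ^ q ^ k) := by
  obtain rfl : ψ = psi q t := funext hψ
  have hqodd : Odd q := hq ▸ hpodd.pow
  have h2 : (2 : F) ≠ 0 := two_ne_zero_of_odd_card F (hF ▸ hqodd.pow)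
  exact ⟨fun x hx => iterate_psi_of_pow_eq_self h2 (by omega) hx k,
    fun x hx => iterate_psi_of_pow_eq_neg hqodd h2 (by omega) hx k⟩

theorem stmt_17 (p r q t k : ℕ) (hp : p.Prime) (hpodd : Odd p) (hr : 0 < r)
    (hq : q = p ^ r) (ht : 3 ≤ t) (hk1 : 1 ≤ k) (hk2 : k < 2 * t)
    (hgcd : Nat.gcd k t = 1)
    (F : Type) [Field F] [Fintype F] (hF : Fintype.card F = q ^ (2 * t))
    (ψ : F → F)
    (hψ : ∀ x : F, ψ x = (x ^ q ^ 1 + x ^ q ^ (t - 1) - x ^ q ^ (t + 1) + x ^ q ^ (2 * t - 1)) / 2) :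
    (∀ x : F, x ^ q ^ t = x → ψ^[k] x = x ^ q ^ ((k * (t - 1)) % (2 * t))) ∧
    (∀ x : F, x ^ q ^ t = -x → ψ^[k] x = x ^ q ^ k) :=
  stmt_17_general p r q t k hpodd hq ht F hF ψ hψ
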